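/- The subspace U is invariant under each of the maps K, K⁻¹, A*_L, B*_L, A*_R, B*_R, A_ℓ, B_ℓ, A_r, B_r. Moreover, on U the q-Serre relations hold for the starred maps: (A*_L)³B*_L − [3]_q (A*_L)²B*_L A*_L + [3]_q A*_L B*_L (A*_L)² − B*_L (A*_L)³ = 0 on U, and likewise with the pair (A*_L, B*_L) replaced by (B*_L, A*_L), by (A*_R, B*_R), and by (B*_R, A*_R). -/

import Mathlib

noncomputable section
namespace SqPaper

/-- The two letters: `0 ↦ A`, `1 ↦ B`. -/
abbrev Ltr := Fin 2
def lA : Ltr := 0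
def lB : Ltr := 1

/-- The pairing `⟨ , ⟩` on letters: `⟨A,A⟩=⟨B,B⟩=2`, `⟨A,B⟩=⟨B,A⟩=-2`. -/
def brk (x y : Ltr) : ℤ := if x = y then 2 else -2

variable (F : Type*) [Field F]

/-- The free algebra `V` on the two generators, realized as the monoid algebra of the
free monoid on two letters; the words form the standard basis. -/
abbrev FA := MonoidAlgebra F (FreeMonoid Ltr)

/-- The standard basis vector attached to a word (list of letters). -/
def wd (l : List Ltr) : FA F := MonoidAlgebra.single (FreeMonoid.ofList l) 1

def Agen : FA F := wd F [lA]
def Bgen : FA F := wd F [lB]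

/-- View an element of `V` as a finitely supported function on words. -/
def fsp (v : FA F) : FreeMonoid Ltr →₀ F := v.coeff

/-- The symmetric bilinear form on `V` for which the standard basis of words is orthonormal. -/
def form (u v : FA F) : F := (fsp F u).sum fun w c => c * (fsp F v) w

/-- Extend a function on words to an `F`-linear map on `V`. -/
def mkMap {M : Type*} [AddCommMonoid M] [Module F M] (f : List Ltr → M) :
    FA F →ₗ[F] M :=
  (Finsupp.lsum F fun w => LinearMap.toSpanSingleton F M (f (FreeMonoid.toList w))) ∘ₗ
    (MonoidAlgebra.coeffLinearEquiv F).toLinearMap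

/-- `[3]_q = (q³ - q⁻³)/(q - q⁻¹)`. -/
def tri (q : F) : F := (q ^ 3 - q⁻¹ ^ 3) / (q - q⁻¹)

/-- The q-shuffle product on words. -/
def shufW (q : F) : List Ltr → List Ltr → FA F
  | [], v => wd F v
  | u, [] => wd F u
  | a :: u, b :: v =>
      wd F [a] * shufW q u (b :: v) +
        (q ^ (((a :: u).map (fun x => brk x b)).sum)) • (wd F [b] * shufW q (a :: u) v)
  termination_by u v => u.length + v.length

/-- The q-shuffle product `⋆` on `V`, as a bilinear map. -/
def qshuf (q : F) : FA F →ₗ[F] FA F →ₗ[F] FA F :=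
  mkMap F fun u => mkMap F fun v => shufW F q u v

/-- Iterated `⋆`-product of the letters of a word. -/
def thetaW (q : F) : List Ltr → FA F
  | [] => 1
  | a :: t => qshuf F q (wd F [a]) (thetaW q t)

/-- `θ : V → V`, the algebra homomorphism from the free algebra to the q-shuffle algebra
with `θ(A) = A`, `θ(B) = B`. -/
def theta (q : F) : FA F →ₗ[F] FA F := mkMap F fun l => thetaW F q l

/-- `A_L`, left multiplication by `A` in the free algebra. -/
def AL : FA F →ₗ[F] FA F := LinearMap.mulLeft F (Agen F)
def BL : FA F →ₗ[F] FA F := LinearMap.mulLeft F (Bgen F)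
def AR : FA F →ₗ[F] FA F := LinearMap.mulRight F (Agen F)
def BR : FA F →ₗ[F] FA F := LinearMap.mulRight F (Bgen F)

/-- `X*_L` (for the letter `x`): deletes the letter `x` from the front of a word. -/
def delL (x : Ltr) : FA F →ₗ[F] FA F :=
  mkMap F fun l => if l.head? = some x then wd F l.tail else 0

/-- `X*_R` (for the letter `x`): deletes the letter `x` from the end of a word. -/
def delR (x : Ltr) : FA F →ₗ[F] FA F :=
  mkMap F fun l => if l.getLast? = some x then wd F l.dropLast else 0

/-- `X_ℓ`: left q-shuffle multiplication by the letter `x`. -/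
def shL (q : F) (x : Ltr) : FA F →ₗ[F] FA F := qshuf F q (wd F [x])

/-- `X_r`: right q-shuffle multiplication by the letter `x`. -/
def shR (q : F) (x : Ltr) : FA F →ₗ[F] FA F := (qshuf F q).flip (wd F [x])

/-- `X*_ℓ`: the weighted deletion map, deleting an occurrence of the letter `x`
with weight `q^{⟨v₁,x⟩+⋯+⟨v_{i-1},x⟩}`. -/
def lowL (q : F) (x : Ltr) : FA F →ₗ[F] FA F :=
  mkMap F fun l =>
    ∑ i ∈ Finset.range l.length,
      if l[i]? = some x then
        (q ^ (((l.take i).map (fun y => brk y x)).sum)) • wd F (l.eraseIdx i)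
      else 0

/-- `X*_r`: the weighted deletion map, deleting an occurrence of the letter `x`
with weight `q^{⟨vₙ,x⟩+⋯+⟨v_{i+1},x⟩}`. -/
def lowR (q : F) (x : Ltr) : FA F →ₗ[F] FA F :=
  mkMap F fun l =>
    ∑ i ∈ Finset.range l.length,
      if l[i]? = some x then
        (q ^ (((l.drop (i + 1)).map (fun y => brk y x)).sum)) • wd F (l.eraseIdx i)
      else 0

/-- `K`, the algebra automorphism of the free algebra `V` with `K(A) = q²A`, `K(B) = q⁻²B`;
on a word `v = v₁⋯vₙ` it acts as `K(v) = v·q^{⟨v₁,A⟩+⋯+⟨vₙ,A⟩}`. -/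
def Kop (q : F) : FA F →ₗ[F] FA F :=
  mkMap F fun l => (q ^ ((l.map (fun y => brk y lA)).sum)) • wd F l

/-- `K⁻¹`; on a word `v = v₁⋯vₙ` it acts as `K⁻¹(v) = v·q^{⟨v₁,B⟩+⋯+⟨vₙ,B⟩}`. -/
def Kinv (q : F) : FA F →ₗ[F] FA F :=
  mkMap F fun l => (q ^ ((l.map (fun y => brk y lB)).sum)) • wd F l

/-- `T`, the automorphism of the free algebra swapping `A` and `B`. -/
def Top : FA F →ₗ[F] FA F :=
  mkMap F fun l => wd F (l.map (fun x => if x = lA then lB else lA))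

/-- `Â = Q(A_L − K B_R)` and `B̂ = Q(B_L − K⁻¹ A_R)` where `Q = 1 - q²`. -/
def hatOp (q : F) (a : Ltr) : FA F →ₗ[F] FA F :=
  if a = lA then (1 - q ^ 2) • (AL F - Kop F q ∘ₗ BR F)
  else (1 - q ^ 2) • (BL F - Kinv F q ∘ₗ AR F)

def phiW (q : F) : List Ltr → FA F
  | [] => 1
  | a :: t => hatOp F q a (phiW q t)

/-- The map `φ`: `φ(1) = 1` and `φ(v₁⋯vₙ) = v̂₁v̂₂⋯v̂ₙ(1)`. -/
def phi (q : F) : FA F →ₗ[F] FA F := mkMap F fun l => phiW F q l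

/-- `ψ = K B_R A*_L + K⁻¹ A_R B*_L`. -/
def psi (q : F) : FA F →ₗ[F] FA F :=
  Kop F q ∘ₗ BR F ∘ₗ delL F lA + Kinv F q ∘ₗ AR F ∘ₗ delL F lB

/-- `V_n`, the span of the words of length `n`. -/
def Vn (n : ℕ) : Submodule F (FA F) :=
  Submodule.span F { x | ∃ l : List Ltr, l.length = n ∧ x = wd F l }

/-- `J⁺ = A³B − [3]_q A²BA + [3]_q ABA² − BA³`. -/
def Jp (q : F) : FA F :=
  Agen F ^ 3 * Bgen F - tri F q • (Agen F ^ 2 * Bgen F * Agen F)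
    + tri F q • (Agen F * Bgen F * Agen F ^ 2) - Bgen F * Agen F ^ 3

/-- `J⁻ = B³A − [3]_q B²AB + [3]_q BAB² − AB³`. -/
def Jm (q : F) : FA F :=
  Bgen F ^ 3 * Agen F - tri F q • (Bgen F ^ 2 * Agen F * Bgen F)
    + tri F q • (Bgen F * Agen F * Bgen F ^ 2) - Agen F * Bgen F ^ 3

/-- `J`, the two-sided ideal of the free algebra generated by `J⁺` and `J⁻`
(realized as the `F`-span of the elements `a·J^±·b`). -/
def Jsub (q : F) : Submodule F (FA F) :=
  Submodule.span F { x | ∃ a b : FA F, x = a * Jp F q * b ∨ x = a * Jm F q * b }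

/-- `U`, the subalgebra of the q-shuffle algebra `(V,⋆)` generated by `A` and `B`,
realized as the span of all `⋆`-products of the letters. -/
def Usub (q : F) : Submodule F (FA F) :=
  Submodule.span F (Set.range fun l : List Ltr => thetaW F q l)

/-- A `□_q`-module structure on an `F`-vector space `M`: four operators
`x₀, x₁, x₂, x₃` (indices mod 4) satisfying the q-Weyl and q-Serre relations. -/
structure SqAct (q : F) (M : Type*) [AddCommGroup M] [Module F M] where
  x : ZMod 4 → Module.End F M
  weyl : ∀ i : ZMod 4,
    q • (x i * x (i + 1)) - q⁻¹ • (x (i + 1) * x i) = (q - q⁻¹) • (1 : Module.End F M)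
  serre : ∀ i : ZMod 4,
    x i ^ 3 * x (i + 2) - tri F q • (x i ^ 2 * x (i + 2) * x i)
      + tri F q • (x i * x (i + 2) * x i ^ 2) - x (i + 2) * x i ^ 3 = 0

variable {F} {q : F} {M : Type*} [AddCommGroup M] [Module F M]

/-- A `□_q`-module `M` is generated by `ξ` if no proper submodule
(subspace invariant under all the `xᵢ`) contains `ξ`. -/
def SqAct.Gen (S : SqAct F q M) (ξ : M) : Prop :=
  ∀ W : Submodule F M, (∀ i : ZMod 4, ∀ m ∈ W, S.x i m ∈ W) → ξ ∈ W → W = ⊤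

/-- `W_n`: the span of the vectors `u₁u₂⋯uₙ·ξ` with each `uᵢ ∈ {x₀, x₂}`. -/
def SqAct.Wn (S : SqAct F q M) (ξ : M) (n : ℕ) : Submodule F M :=
  Submodule.span F
    { m | ∃ l : List (ZMod 4), l.length = n ∧ (∀ i ∈ l, i = 0 ∨ i = 2) ∧
        m = l.foldr (fun i acc => S.x i acc) ξ }

end SqPaper

/-! `U` is spanned by the iterated products `θ(v₁⋯vₙ) = v₁ ⋆ (v₂ ⋆ ⋯ ⋆ (vₙ ⋆ 1))`.
Associativity of `⋆` on letters lets one peel off the last letter of `θ(v)` as well as the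
first, so `U` is stable under the `X_ℓ` and the `X_r`. The other maps satisfy q-commutation rules
with them: `X*_L Y_ℓ = δ_{XY} + q^{⟨Y,X⟩} Y_ℓ X*_L`, its mirror image on the right, and
`K Y_ℓ = q^{⟨Y,A⟩} Y_ℓ K`; invariance follows by induction on the word.

For the Serre relations put `c = q²`. The rules say `X*_L X_ℓ = 1 + c X_ℓ X*_L` and
`Y*_L X_ℓ = c⁻¹ X_ℓ Y*_L`, and pushing `X_ℓ` through the Serre operator `S` of `(X*_L, Y*_L)`
leaves `c² X_ℓ S` plus terms whose coefficient vanishes precisely because the middle coefficient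
is `c + 1 + c⁻¹ = [3]_q`. The same happens for `Y_ℓ` (with `c⁻²`), so `S` kills every `θ(v)`,
since `S 1 = 0`. -/

namespace SqPaper

variable {F : Type*} [Field F] {q : F}

lemma mkMap_wd {M : Type*} [AddCommMonoid M] [Module F M] (f : List Ltr → M) (l : List Ltr) :
    mkMap F f (wd F l) = f l := by
  rw [mkMap, LinearMap.comp_apply, LinearEquiv.coe_coe, MonoidAlgebra.coeffLinearEquiv_apply,
    wd, MonoidAlgebra.coeff_single, Finsupp.lsum_single, LinearMap.toSpanSingleton_apply,
    one_smul, FreeMonoid.toList_ofList]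

lemma wd_nil : wd F [] = 1 := rfl

lemma wd_append (l m : List Ltr) : wd F (l ++ m) = wd F l * wd F m := by
  simp [wd, MonoidAlgebra.single_mul_single, FreeMonoid.ofList_append]

lemma wd_cons (a : Ltr) (l : List Ltr) : wd F (a :: l) = wd F [a] * wd F l :=
  wd_append [a] l

lemma hom_ext_wd {M : Type*} [AddCommMonoid M] [Module F M] {f g : FA F →ₗ[F] M}
    (h : ∀ l, f (wd F l) = g (wd F l)) : f = g :=
  MonoidAlgebra.lhom_ext' fun w => LinearMap.ext_ring <| by simpa [wd] using h w.toList

lemma brk_self (x : Ltr) : brk x x = 2 := if_pos rfl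

lemma brk_of_ne {x y : Ltr} (h : x ≠ y) : brk x y = -2 := if_neg h

lemma brk_comm (x y : Ltr) : brk x y = brk y x := by
  simp only [brk, eq_comm]

lemma Ltr.eq_or_eq_of_ne {x y : Ltr} (h : x ≠ y) (a : Ltr) : a = x ∨ a = y := by
  revert a x y; decide

/-- `Kop = weightOp q lA` and `Kinv = weightOp q lB`. -/
def weightOp (q : F) (y : Ltr) : FA F →ₗ[F] FA F :=
  mkMap F fun l => q ^ (l.map fun z => brk z y).sum • wd F l

lemma weightOp_wd (y : Ltr) (l : List Ltr) :
    weightOp q y (wd F l) = q ^ (l.map fun z => brk z y).sum • wd F l :=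
  mkMap_wd _ l

lemma weightOp_one (y : Ltr) : weightOp q y (1 : FA F) = 1 := by
  rw [← wd_nil, weightOp_wd]; simp

lemma weightOp_letter (y b : Ltr) : weightOp q y (wd F [b]) = q ^ brk b y • wd F [b] := by
  rw [weightOp_wd]; simp

lemma weightOp_mul (hq : q ≠ 0) (y : Ltr) (X Y : FA F) :
    weightOp q y (X * Y) = weightOp q y X * weightOp q y Y := by
  have hwd : ∀ l m, weightOp q y (wd F l * wd F m) =
      weightOp q y (wd F l) * weightOp q y (wd F m) := by
    intro l m
    simp only [← wd_append, weightOp_wd, List.map_append, List.sum_append, zpow_add₀ hq,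
      smul_mul_smul_comm]
  have hleft : ∀ l, weightOp q y ∘ₗ LinearMap.mulLeft F (wd F l) =
      LinearMap.mulLeft F (weightOp q y (wd F l)) ∘ₗ weightOp q y :=
    fun l => hom_ext_wd (hwd l)
  have hright : weightOp q y ∘ₗ LinearMap.mulRight F Y =
      LinearMap.mulRight F (weightOp q y Y) ∘ₗ weightOp q y :=
    hom_ext_wd fun l => LinearMap.congr_fun (hleft l) Y
  exact LinearMap.congr_fun hright X

lemma shufW_nil_left (v : List Ltr) : shufW F q [] v = wd F v := by
  cases v <;> simp [shufW]

lemma shufW_nil_right (u : List Ltr) : shufW F q u [] = wd F u := by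
  cases u <;> simp [shufW]

lemma shL_wd (a : Ltr) (l : List Ltr) : shL F q a (wd F l) = shufW F q [a] l := by
  rw [shL, qshuf, mkMap_wd, mkMap_wd]

lemma shR_wd (y : Ltr) (l : List Ltr) : shR F q y (wd F l) = shufW F q l [y] := by
  rw [shR, LinearMap.flip_apply, qshuf, mkMap_wd, mkMap_wd]

lemma shL_one (a : Ltr) : shL F q a 1 = wd F [a] := by
  rw [← wd_nil, shL_wd, shufW_nil_right]

lemma shR_one (y : Ltr) : shR F q y 1 = wd F [y] := by
  rw [← wd_nil, shR_wd, shufW_nil_left]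

lemma shL_letter_mul (a b : Ltr) (X : FA F) :
    shL F q a (wd F [b] * X) =
      wd F [a] * (wd F [b] * X) + q ^ brk a b • (wd F [b] * shL F q a X) := by
  suffices h : shL F q a ∘ₗ LinearMap.mulLeft F (wd F [b]) =
      LinearMap.mulLeft F (wd F [a] * wd F [b]) +
        q ^ brk a b • (LinearMap.mulLeft F (wd F [b]) ∘ₗ shL F q a) by
    simpa [mul_assoc] using LinearMap.congr_fun h X
  refine hom_ext_wd fun l => ?_
  simp only [LinearMap.comp_apply, LinearMap.add_apply, LinearMap.smul_apply,
    LinearMap.mulLeft_apply, ← wd_append, shL_wd, List.singleton_append]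
  rw [shufW, shufW_nil_left, ← wd_append]
  simp

lemma shR_letter_mul (y b : Ltr) (X : FA F) :
    shR F q y (wd F [b] * X) =
      wd F [b] * shR F q y X + wd F [y] * weightOp q y (wd F [b] * X) := by
  suffices h : shR F q y ∘ₗ LinearMap.mulLeft F (wd F [b]) =
      LinearMap.mulLeft F (wd F [b]) ∘ₗ shR F q y +
        LinearMap.mulLeft F (wd F [y]) ∘ₗ weightOp q y ∘ₗ LinearMap.mulLeft F (wd F [b]) from
    LinearMap.congr_fun h X
  refine hom_ext_wd fun l => ?_
  simp only [LinearMap.comp_apply, LinearMap.add_apply, LinearMap.mulLeft_apply, ← wd_append,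
    shR_wd, weightOp_wd, List.singleton_append, mul_smul_comm]
  rw [shufW, shufW_nil_right, ← wd_append, List.singleton_append]

lemma shR_letter (y b : Ltr) :
    shR F q y (wd F [b]) = wd F [b] * wd F [y] + q ^ brk b y • (wd F [y] * wd F [b]) := by
  simpa [shR_one, weightOp_letter] using shR_letter_mul (q := q) y b 1

lemma weightOp_shL (hq : q ≠ 0) (y a : Ltr) (X : FA F) :
    weightOp q y (shL F q a X) = q ^ brk a y • shL F q a (weightOp q y X) := by
  have h : ∀ l, weightOp q y (shL F q a (wd F l)) =
      q ^ brk a y • shL F q a (weightOp q y (wd F l)) := by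
    intro l
    induction l with
    | nil => simp [wd_nil, shL_one, weightOp_one, weightOp_letter]
    | cons b t ih =>
      rw [wd_cons, shL_letter_mul, map_add, map_smul, weightOp_mul hq, weightOp_mul hq,
        weightOp_mul hq, ih, weightOp_letter, weightOp_letter]
      simp only [smul_mul_assoc, mul_smul_comm, map_smul, shL_letter_mul, smul_add]
      module
  exact LinearMap.congr_fun (hom_ext_wd (f := weightOp q y ∘ₗ shL F q a)
    (g := q ^ brk a y • (shL F q a ∘ₗ weightOp q y)) h) X

lemma shR_shL_comm (hq : q ≠ 0) (y a : Ltr) (X : FA F) :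
    shR F q y (shL F q a X) = shL F q a (shR F q y X) := by
  have h : ∀ l, shR F q y (shL F q a (wd F l)) = shL F q a (shR F q y (wd F l)) := by
    intro l
    induction l with
    | nil =>
      rw [wd_nil, shL_one, shR_one, shR_letter, ← mul_one (wd F [y]), shL_letter_mul, shL_one,
        mul_one, brk_comm]
    | cons b t ih =>
      rw [wd_cons, shL_letter_mul, map_add, map_smul, shR_letter_mul, shR_letter_mul,
        shR_letter_mul, ih, map_add, shL_letter_mul, shL_letter_mul, weightOp_mul hq,
        weightOp_mul hq, weightOp_mul hq, weightOp_mul hq, weightOp_shL hq, weightOp_letter,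
        weightOp_letter]
      simp only [smul_mul_assoc, mul_smul_comm, map_smul, shL_letter_mul, smul_add, mul_add]
      module
  exact LinearMap.congr_fun (hom_ext_wd (f := shR F q y ∘ₗ shL F q a)
    (g := shL F q a ∘ₗ shR F q y) h) X

lemma shR_mul_letter (hq : q ≠ 0) (y c : Ltr) (X : FA F) :
    shR F q y (X * wd F [c]) =
      X * wd F [c] * wd F [y] + q ^ brk c y • (shR F q y X * wd F [c]) := by
  have h : ∀ l, shR F q y (wd F l * wd F [c]) =
      wd F l * wd F [c] * wd F [y] + q ^ brk c y • (shR F q y (wd F l) * wd F [c]) := by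
    intro l
    induction l with
    | nil => simp [wd_nil, shR_one, shR_letter]
    | cons b t ih =>
      rw [wd_cons, mul_assoc, shR_letter_mul, ih, shR_letter_mul, weightOp_mul hq,
        weightOp_mul hq, weightOp_mul hq]
      simp only [weightOp_letter, smul_mul_assoc, mul_smul_comm, smul_add, mul_add, add_mul,
        mul_assoc]
      module
  exact LinearMap.congr_fun (hom_ext_wd (f := shR F q y ∘ₗ LinearMap.mulRight F (wd F [c]))
    (g := LinearMap.mulRight F (wd F [y]) ∘ₗ LinearMap.mulRight F (wd F [c]) +
      q ^ brk c y • (LinearMap.mulRight F (wd F [c]) ∘ₗ shR F q y)) h) X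

lemma delL_wd (x : Ltr) (l : List Ltr) :
    delL F x (wd F l) = if l.head? = some x then wd F l.tail else 0 :=
  mkMap_wd _ l

lemma delR_wd (x : Ltr) (l : List Ltr) :
    delR F x (wd F l) = if l.getLast? = some x then wd F l.dropLast else 0 :=
  mkMap_wd _ l

lemma delL_one (x : Ltr) : delL F x (1 : FA F) = 0 := by
  rw [← wd_nil, delL_wd]; simp

lemma delR_one (x : Ltr) : delR F x (1 : FA F) = 0 := by
  rw [← wd_nil, delR_wd]; simp

lemma delL_letter_mul (x b : Ltr) (X : FA F) :
    delL F x (wd F [b] * X) = if b = x then X else 0 := by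
  have h : delL F x ∘ₗ LinearMap.mulLeft F (wd F [b]) = if b = x then LinearMap.id else 0 :=
    hom_ext_wd fun l => by
      rw [LinearMap.comp_apply, LinearMap.mulLeft_apply, ← wd_append, delL_wd]
      split_ifs <;> simp_all
  split_ifs at h ⊢ <;> simpa using LinearMap.congr_fun h X

lemma delR_mul_letter (x c : Ltr) (X : FA F) :
    delR F x (X * wd F [c]) = if c = x then X else 0 := by
  have h : delR F x ∘ₗ LinearMap.mulRight F (wd F [c]) = if c = x then LinearMap.id else 0 :=
    hom_ext_wd fun l => by
      rw [LinearMap.comp_apply, LinearMap.mulRight_apply, ← wd_append, delR_wd]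
      split_ifs <;> simp_all
  split_ifs at h ⊢ <;> simpa using LinearMap.congr_fun h X

lemma delL_shL (x a : Ltr) (X : FA F) :
    delL F x (shL F q a X) = (if a = x then X else 0) + q ^ brk a x • shL F q a (delL F x X) := by
  have h : delL F x ∘ₗ shL F q a =
      (if a = x then LinearMap.id else 0) + q ^ brk a x • (shL F q a ∘ₗ delL F x) := by
    refine hom_ext_wd fun l => ?_
    cases l with
    | nil => by_cases a = x <;> simp_all [wd_nil, shL_one, delL_one, delL_wd]
    | cons b t =>
      simp only [LinearMap.comp_apply, LinearMap.add_apply, LinearMap.smul_apply, wd_cons b t,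
        shL_letter_mul, map_add, map_smul, delL_letter_mul]
      by_cases b = x <;> by_cases a = x <;> simp_all
  split_ifs at h ⊢ <;> simpa using LinearMap.congr_fun h X

lemma delR_shR (hq : q ≠ 0) (x y : Ltr) (X : FA F) :
    delR F x (shR F q y X) = (if y = x then X else 0) + q ^ brk y x • shR F q y (delR F x X) := by
  have h : delR F x ∘ₗ shR F q y =
      (if y = x then LinearMap.id else 0) + q ^ brk y x • (shR F q y ∘ₗ delR F x) := by
    refine hom_ext_wd fun l => ?_
    cases l using List.reverseRecOn with
    | nil => by_cases y = x <;> simp_all [wd_nil, shR_one, delR_one, delR_wd]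
    | append_singleton t c =>
      simp only [LinearMap.comp_apply, LinearMap.add_apply, LinearMap.smul_apply, wd_append,
        shR_mul_letter hq, map_add, map_smul, delR_mul_letter]
      by_cases c = x <;> by_cases y = x <;> simp_all [brk_comm]
  split_ifs at h ⊢ <;> simpa using LinearMap.congr_fun h X

lemma thetaW_cons (a : Ltr) (l : List Ltr) : thetaW F q (a :: l) = shL F q a (thetaW F q l) :=
  rfl

lemma thetaW_append (hq : q ≠ 0) (l : List Ltr) (y : Ltr) :
    thetaW F q (l ++ [y]) = shR F q y (thetaW F q l) := by
  induction l with
  | nil => rw [List.nil_append, thetaW_cons, thetaW, shR_one, shL_one]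
  | cons a t ih => rw [List.cons_append, thetaW_cons, thetaW_cons, ih, shR_shL_comm hq]

lemma thetaW_mem_Usub (l : List Ltr) : thetaW F q l ∈ Usub F q :=
  Submodule.subset_span ⟨l, rfl⟩

lemma map_mem_Usub {f : FA F →ₗ[F] FA F} (hf : ∀ l, f (thetaW F q l) ∈ Usub F q)
    {v : FA F} (hv : v ∈ Usub F q) : f v ∈ Usub F q :=
  (Submodule.span_le (p := (Usub F q).comap f)).mpr (Set.range_subset_iff.mpr hf) hv

lemma map_eq_zero_of_mem_Usub {f : FA F →ₗ[F] FA F} (hf : ∀ l, f (thetaW F q l) = 0)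
    {v : FA F} (hv : v ∈ Usub F q) : f v = 0 :=
  (Submodule.span_le (p := LinearMap.ker f)).mpr (Set.range_subset_iff.mpr hf) hv

lemma shL_mem_Usub (a : Ltr) {v : FA F} (hv : v ∈ Usub F q) : shL F q a v ∈ Usub F q :=
  map_mem_Usub (fun l => thetaW_mem_Usub (a :: l)) hv

lemma shR_mem_Usub (hq : q ≠ 0) (y : Ltr) {v : FA F} (hv : v ∈ Usub F q) :
    shR F q y v ∈ Usub F q :=
  map_mem_Usub (fun l => thetaW_append hq l y ▸ thetaW_mem_Usub _) hv

lemma weightOp_mem_Usub (hq : q ≠ 0) (y : Ltr) {v : FA F} (hv : v ∈ Usub F q) :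
    weightOp q y v ∈ Usub F q := by
  refine map_mem_Usub (fun l => ?_) hv
  induction l with
  | nil => rw [thetaW, weightOp_one]; exact thetaW_mem_Usub []
  | cons a t ih =>
    rw [thetaW_cons, weightOp_shL hq]
    exact Submodule.smul_mem _ _ (shL_mem_Usub a ih)

lemma delL_mem_Usub (x : Ltr) {v : FA F} (hv : v ∈ Usub F q) : delL F x v ∈ Usub F q := by
  refine map_mem_Usub (fun l => ?_) hv
  induction l with
  | nil => rw [thetaW, delL_one]; exact zero_mem _
  | cons a t ih =>
    rw [thetaW_cons, delL_shL]
    refine add_mem ?_ (Submodule.smul_mem _ _ (shL_mem_Usub a ih))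
    split_ifs
    exacts [thetaW_mem_Usub t, zero_mem _]

lemma delR_mem_Usub (hq : q ≠ 0) (x : Ltr) {v : FA F} (hv : v ∈ Usub F q) :
    delR F x v ∈ Usub F q := by
  refine map_mem_Usub (fun l => ?_) hv
  induction l using List.reverseRecOn with
  | nil => rw [thetaW, delR_one]; exact zero_mem _
  | append_singleton t y ih =>
    rw [thetaW_append hq, delR_shR hq]
    refine add_mem ?_ (Submodule.smul_mem _ _ (shR_mem_Usub hq y ih))
    split_ifs
    exacts [thetaW_mem_Usub t, zero_mem _]

section Serre

variable {M : Type*} [AddCommGroup M] [Module F M]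

def serreOp (t : F) (d e : M →ₗ[F] M) : M →ₗ[F] M :=
  d ∘ₗ d ∘ₗ d ∘ₗ e - t • (d ∘ₗ d ∘ₗ e ∘ₗ d) + t • (d ∘ₗ e ∘ₗ d ∘ₗ d) - e ∘ₗ d ∘ₗ d ∘ₗ d

lemma serreOp_apply_of_dual_fst {c : F} (hc : c ≠ 0) {d e p : M →ₗ[F] M}
    (hdp : ∀ v, d (p v) = v + c • p (d v)) (hep : ∀ v, e (p v) = c⁻¹ • p (e v)) (v : M) :
    serreOp (c + 1 + c⁻¹) d e (p v) = (c * c) • p (serreOp (c + 1 + c⁻¹) d e v) := by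
  simp only [serreOp, LinearMap.sub_apply, LinearMap.add_apply, LinearMap.smul_apply,
    LinearMap.comp_apply, hdp, hep, map_add, map_smul, map_sub, smul_add, smul_sub, smul_smul]
  match_scalars <;> field_simp <;> ring

lemma serreOp_apply_of_dual_snd {c : F} (hc : c ≠ 0) {d e r : M →ₗ[F] M}
    (hdr : ∀ v, d (r v) = c⁻¹ • r (d v)) (her : ∀ v, e (r v) = v + c • r (e v)) (v : M) :
    serreOp (c + 1 + c⁻¹) d e (r v) = (c * c)⁻¹ • r (serreOp (c + 1 + c⁻¹) d e v) := by
  simp only [serreOp, LinearMap.sub_apply, LinearMap.add_apply, LinearMap.smul_apply,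
    LinearMap.comp_apply, hdr, her, map_add, map_smul, map_sub, smul_add, smul_sub, smul_smul]
  match_scalars <;> field_simp
  ring

end Serre

lemma tri_eq (hq : q ≠ 0) (hq2 : q ^ 2 ≠ 1) : tri F q = q ^ 2 + 1 + (q ^ 2)⁻¹ := by
  have hsub : q - q⁻¹ ≠ 0 := fun h => hq2 (by field_simp at h; linear_combination h)
  rw [tri, div_eq_iff hsub]
  field_simp
  ring

lemma delL_shL_self (x : Ltr) (v : FA F) :
    delL F x (shL F q x v) = v + q ^ 2 • shL F q x (delL F x v) := by
  simpa [brk_self] using delL_shL (q := q) x x v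

lemma delL_shL_of_ne {x a : Ltr} (h : a ≠ x) (v : FA F) :
    delL F x (shL F q a v) = (q ^ 2)⁻¹ • shL F q a (delL F x v) := by
  simpa [h, brk_of_ne h] using delL_shL (q := q) x a v

lemma delR_shR_self (hq : q ≠ 0) (x : Ltr) (v : FA F) :
    delR F x (shR F q x v) = v + q ^ 2 • shR F q x (delR F x v) := by
  simpa [brk_self] using delR_shR hq x x v

lemma delR_shR_of_ne (hq : q ≠ 0) {x a : Ltr} (h : a ≠ x) (v : FA F) :
    delR F x (shR F q a v) = (q ^ 2)⁻¹ • shR F q a (delR F x v) := by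
  simpa [h, brk_of_ne h] using delR_shR hq x a v

lemma serreOp_delL_thetaW (hq : q ≠ 0) (hq2 : q ^ 2 ≠ 1) {x y : Ltr} (hxy : x ≠ y)
    (l : List Ltr) : serreOp (tri F q) (delL F x) (delL F y) (thetaW F q l) = 0 := by
  have hc : q ^ 2 ≠ 0 := pow_ne_zero 2 hq
  rw [tri_eq hq hq2]
  induction l with
  | nil => simp [serreOp, thetaW, delL_one]
  | cons a t ih =>
    rw [thetaW_cons]
    rcases Ltr.eq_or_eq_of_ne hxy a with rfl | rfl
    · rw [serreOp_apply_of_dual_fst hc (delL_shL_self a) (delL_shL_of_ne hxy), ih, map_zero,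
        smul_zero]
    · rw [serreOp_apply_of_dual_snd hc (delL_shL_of_ne hxy.symm) (delL_shL_self a), ih,
        map_zero, smul_zero]

lemma serreOp_delR_thetaW (hq : q ≠ 0) (hq2 : q ^ 2 ≠ 1) {x y : Ltr} (hxy : x ≠ y)
    (l : List Ltr) : serreOp (tri F q) (delR F x) (delR F y) (thetaW F q l) = 0 := by
  have hc : q ^ 2 ≠ 0 := pow_ne_zero 2 hq
  rw [tri_eq hq hq2]
  induction l using List.reverseRecOn with
  | nil => simp [serreOp, thetaW, delR_one]
  | append_singleton t a ih =>
    rw [thetaW_append hq]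
    rcases Ltr.eq_or_eq_of_ne hxy a with rfl | rfl
    · rw [serreOp_apply_of_dual_fst hc (delR_shR_self hq a) (delR_shR_of_ne hq hxy), ih,
        map_zero, smul_zero]
    · rw [serreOp_apply_of_dual_snd hc (delR_shR_of_ne hq hxy.symm) (delR_shR_self hq a), ih,
        map_zero, smul_zero]

end SqPaper

open SqPaper in
/-- `U` is invariant under `K, K⁻¹, A*_L, B*_L, A*_R, B*_R, A_ℓ, B_ℓ, A_r, B_r`,
and the q-Serre relations for the starred maps hold on `U`. -/
theorem U_invariant_and_qSerre (F : Type*) [Field F] (q : F) (hq : q ≠ 0)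
    (hq1 : ∀ k : ℕ, 0 < k → q ^ k ≠ 1) :
    (∀ v ∈ Usub F q, Kop F q v ∈ Usub F q) ∧
    (∀ v ∈ Usub F q, Kinv F q v ∈ Usub F q) ∧
    (∀ v ∈ Usub F q, delL F lA v ∈ Usub F q) ∧
    (∀ v ∈ Usub F q, delL F lB v ∈ Usub F q) ∧
    (∀ v ∈ Usub F q, delR F lA v ∈ Usub F q) ∧
    (∀ v ∈ Usub F q, delR F lB v ∈ Usub F q) ∧
    (∀ v ∈ Usub F q, shL F q lA v ∈ Usub F q) ∧
    (∀ v ∈ Usub F q, shL F q lB v ∈ Usub F q) ∧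
    (∀ v ∈ Usub F q, shR F q lA v ∈ Usub F q) ∧
    (∀ v ∈ Usub F q, shR F q lB v ∈ Usub F q) ∧
    (∀ v ∈ Usub F q,
      (delL F lA ∘ₗ delL F lA ∘ₗ delL F lA ∘ₗ delL F lB
        - tri F q • (delL F lA ∘ₗ delL F lA ∘ₗ delL F lB ∘ₗ delL F lA)
        + tri F q • (delL F lA ∘ₗ delL F lB ∘ₗ delL F lA ∘ₗ delL F lA)
        - delL F lB ∘ₗ delL F lA ∘ₗ delL F lA ∘ₗ delL F lA) v = 0) ∧
    (∀ v ∈ Usub F q,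
      (delL F lB ∘ₗ delL F lB ∘ₗ delL F lB ∘ₗ delL F lA
        - tri F q • (delL F lB ∘ₗ delL F lB ∘ₗ delL F lA ∘ₗ delL F lB)
        + tri F q • (delL F lB ∘ₗ delL F lA ∘ₗ delL F lB ∘ₗ delL F lB)
        - delL F lA ∘ₗ delL F lB ∘ₗ delL F lB ∘ₗ delL F lB) v = 0) ∧
    (∀ v ∈ Usub F q,
      (delR F lA ∘ₗ delR F lA ∘ₗ delR F lA ∘ₗ delR F lB
        - tri F q • (delR F lA ∘ₗ delR F lA ∘ₗ delR F lB ∘ₗ delR F lA)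
        + tri F q • (delR F lA ∘ₗ delR F lB ∘ₗ delR F lA ∘ₗ delR F lA)
        - delR F lB ∘ₗ delR F lA ∘ₗ delR F lA ∘ₗ delR F lA) v = 0) ∧
    (∀ v ∈ Usub F q,
      (delR F lB ∘ₗ delR F lB ∘ₗ delR F lB ∘ₗ delR F lA
        - tri F q • (delR F lB ∘ₗ delR F lB ∘ₗ delR F lA ∘ₗ delR F lB)
        + tri F q • (delR F lB ∘ₗ delR F lA ∘ₗ delR F lB ∘ₗ delR F lB)
        - delR F lA ∘ₗ delR F lB ∘ₗ delR F lB ∘ₗ delR F lB) v = 0) := by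
  have hq2 : q ^ 2 ≠ 1 := hq1 2 two_pos
  exact ⟨fun _ => weightOp_mem_Usub hq lA, fun _ => weightOp_mem_Usub hq lB,
    fun _ => delL_mem_Usub lA, fun _ => delL_mem_Usub lB,
    fun _ => delR_mem_Usub hq lA, fun _ => delR_mem_Usub hq lB,
    fun _ => shL_mem_Usub lA, fun _ => shL_mem_Usub lB,
    fun _ => shR_mem_Usub hq lA, fun _ => shR_mem_Usub hq lB,
    fun _ => map_eq_zero_of_mem_Usub (serreOp_delL_thetaW hq hq2 (by decide)),
    fun _ => map_eq_zero_of_mem_Usub (serreOp_delL_thetaW hq hq2 (by decide)),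
    fun _ => map_eq_zero_of_mem_Usub (serreOp_delR_thetaW hq hq2 (by decide)),
    fun _ => map_eq_zero_of_mem_Usub (serreOp_delR_thetaW hq hq2 (by decide))⟩
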